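/- arXiv:1904.01388 — 7 statements merged into one kernel-verified Lean document; each statement's English description precedes it below -/
import Mathlib

section
/- Let C and A be complete lattices, (α, γ) a Galois connection between C and A, and f : C → C monotone. Then γ(lfp(α ∘ f ∘ γ)) = lfp(γ ∘ α ∘ f). -/
theorem stmt_0 {C A : Type*} [CompleteLattice C] [CompleteLattice A]
    (α : C → A) (γ : A → C) (gc : GaloisConnection α γ)
    (f : C → C) (hf : Monotone f) :
    γ (OrderHom.lfp ⟨fun a => α (f (γ a)), gc.monotone_l.comp (hf.comp gc.monotone_u)⟩)
      = OrderHom.lfp ⟨fun c => γ (α (f c)), gc.monotone_u.comp (gc.monotone_l.comp hf)⟩ := by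
  set g : A →o A := ⟨fun a => α (f (γ a)), gc.monotone_l.comp (hf.comp gc.monotone_u)⟩
  set h : C →o C := ⟨fun c => γ (α (f c)), gc.monotone_u.comp (gc.monotone_l.comp hf)⟩
  have hgfix : α (f (γ (OrderHom.lfp g))) = OrderHom.lfp g := OrderHom.map_lfp g
  have hhfix : γ (α (f (OrderHom.lfp h))) = OrderHom.lfp h := OrderHom.map_lfp h
  apply le_antisymm
  · -- γ (lfp g) ≤ lfp h : first show lfp g ≤ α (lfp h)
    have h1 : OrderHom.lfp g ≤ α (OrderHom.lfp h) := by
      apply OrderHom.lfp_le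
      show α (f (γ (α (OrderHom.lfp h)))) ≤ α (OrderHom.lfp h)
      have hγα : γ (α (OrderHom.lfp h)) = OrderHom.lfp h := by
        conv_lhs => rw [← hhfix]
        rw [gc.u_l_u_eq_u]
        exact hhfix
      rw [hγα]
      have hfle : f (OrderHom.lfp h) ≤ OrderHom.lfp h := by
        conv_rhs => rw [← hhfix]
        exact gc.le_u_l _
      exact gc.l_le (hfle.trans (gc.le_u_l _))
    calc γ (OrderHom.lfp g) ≤ γ (α (OrderHom.lfp h)) := gc.monotone_u h1
      _ = OrderHom.lfp h := by
          conv_lhs => rw [← hhfix, gc.u_l_u_eq_u]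
          exact hhfix
  · apply OrderHom.lfp_le
    show γ (α (f (γ (OrderHom.lfp g)))) ≤ γ (OrderHom.lfp g)
    rw [hgfix]
end

section
/- Let C be a complete lattice, f : C → C monotone, and ρ an upper closure operator on C that is backward complete for f, i.e., ρ ∘ f = ρ ∘ f ∘ ρ. Then for every n ∈ ℕ, ρ ∘ fⁿ = (ρ ∘ f)ⁿ ∘ ρ. -/
theorem stmt_1 {C : Type*} [CompleteLattice C] (f : C → C) (hf : Monotone f)
    (ρ : C → C) (hmono : Monotone ρ) (hidem : ∀ x, ρ (ρ x) = ρ x)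
    (hext : ∀ x, x ≤ ρ x)
    (hbc : ρ ∘ f = ρ ∘ f ∘ ρ) :
    ∀ n : ℕ, ρ ∘ f^[n] = (ρ ∘ f)^[n] ∘ ρ := by
  intro n
  induction n with
  | zero => rfl
  | succ n ih =>
    funext x
    have h1 : (ρ ∘ f)^[n+1] (ρ x) = (ρ ∘ f) ((ρ ∘ f)^[n] (ρ x)) :=
      Function.iterate_succ_apply' _ _ _
    have h2 : (ρ ∘ f)^[n] (ρ x) = ρ (f^[n] x) := (congrFun ih x).symm
    have hb : ρ (f (ρ (f^[n] x))) = ρ (f (f^[n] x)) := (congrFun hbc (f^[n] x)).symm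
    simp only [Function.comp_apply, h1, h2, Function.comp]
    rw [hb, ← Function.iterate_succ_apply' f n x]
end

section
/- Let C be a complete lattice, f : C → C monotone with x ≤ f(x), and ρ an upper closure operator on C that is backward complete for f (ρ ∘ f = ρ ∘ f ∘ ρ). Then ρ(lfp_x(f)) = lfp_x(ρ ∘ f), where lfp_x denotes the least fixpoint above x. -/
lemma lfp_aux {C : Type*} [CompleteLattice C] (g : C → C) (hg : Monotone g)
    (x : C) (hx : x ≤ g x) :
    g (sInf {y | g y = y ∧ x ≤ y}) = sInf {y | g y = y ∧ x ≤ y} ∧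
    x ≤ sInf {y | g y = y ∧ x ≤ y} ∧
    ∀ z, g z ≤ z → x ≤ z → sInf {y | g y = y ∧ x ≤ y} ≤ z := by
  set L' := sInf {y | g y ≤ y ∧ x ≤ y} with hL'
  have hxL' : x ≤ L' := le_sInf fun y hy => hy.2
  have hfL' : g L' ≤ L' := le_sInf fun y hy => le_trans (hg (sInf_le hy)) hy.1
  have hfix : g L' = L' := le_antisymm hfL' (sInf_le ⟨hg hfL', hx.trans (hg hxL')⟩)
  have hLle : sInf {y | g y = y ∧ x ≤ y} ≤ L' := sInf_le ⟨hfix, hxL'⟩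
  have hleL : L' ≤ sInf {y | g y = y ∧ x ≤ y} :=
    le_sInf fun y hy => sInf_le ⟨le_of_eq hy.1, hy.2⟩
  have hEq : sInf {y | g y = y ∧ x ≤ y} = L' := le_antisymm hLle hleL
  refine ⟨by rw [hEq]; exact hfix, by rw [hEq]; exact hxL', fun z hz hxz => ?_⟩
  rw [hEq]; exact sInf_le ⟨hz, hxz⟩

theorem stmt_2 {C : Type*} [CompleteLattice C] (f : C → C) (hf : Monotone f)
    (x : C) (hx : x ≤ f x)
    (ρ : C → C) (hmono : Monotone ρ) (hidem : ∀ y, ρ (ρ y) = ρ y)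
    (hext : ∀ y, y ≤ ρ y)
    (hbc : ρ ∘ f = ρ ∘ f ∘ ρ) :
    ρ (sInf {y | f y = y ∧ x ≤ y}) = sInf {y | ρ (f y) = y ∧ x ≤ y} := by
  have hbc' : ∀ y, ρ (f y) = ρ (f (ρ y)) := fun y => congrFun hbc y
  obtain ⟨hfixL, hxL, hLmin⟩ := lfp_aux f hf x hx
  have hgmono : Monotone (fun y => ρ (f y)) := hmono.comp hf
  have hxg : x ≤ ρ (f x) := hx.trans (hext (f x))
  obtain ⟨hfixR, hxR, _⟩ := lfp_aux (fun y => ρ (f y)) hgmono x hxg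
  set L := sInf {y | f y = y ∧ x ≤ y}
  set R := sInf {y | ρ (f y) = y ∧ x ≤ y}
  have hfRR : f R ≤ R := le_trans (hext (f R)) (le_of_eq hfixR)
  have hρR : ρ R = R := by
    conv_lhs => rw [← hfixR]
    rw [hidem]; exact hfixR
  have h1 : ρ L ≤ R := by
    have := hmono (hLmin R hfRR hxR)
    rwa [hρR] at this
  have h2 : R ≤ ρ L := by
    refine sInf_le ⟨?_, hxL.trans (hext L)⟩
    rw [← hbc' L, hfixL]
  exact le_antisymm h1 h2
end

section
/- Let ⩽ be a quasiorder on Σ* and ρ its induced upward-closure operator on ℘(Σ*). Then ⩽ is left-monotonic (x₁ ⩽ x₂ implies a·x₁ ⩽ a·x₂ for all a ∈ Σ) if and only if ρ is backward complete for left concatenation by every letter, i.e., for all a ∈ Σ and X ⊆ Σ*, ρ(aX) = ρ(a·ρ(X)). -/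
theorem stmt_7 {α : Type*} (r : List α → List α → Prop)
    (hrefl : Reflexive r) (htrans : Transitive r)
    (ρ : Set (List α) → Set (List α))
    (hρ : ∀ X, ρ X = {v | ∃ u ∈ X, r u v}) :
    (∀ (a : α) (x₁ x₂ : List α), r x₁ x₂ → r (a :: x₁) (a :: x₂)) ↔
      (∀ (a : α) (X : Set (List α)), ρ ((a :: ·) '' X) = ρ ((a :: ·) '' ρ X)) := by
  constructor
  · intro hmono a X
    ext v
    simp only [hρ, Set.mem_setOf_eq, Set.mem_image]
    constructor
    · rintro ⟨u, ⟨x, hx, rfl⟩, hr⟩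
      exact ⟨a :: x, ⟨x, ⟨x, hx, hrefl x⟩, rfl⟩, hr⟩
    · rintro ⟨u, ⟨x, hx, rfl⟩, hr⟩
      obtain ⟨w, hw, hrw⟩ := hx
      exact ⟨a :: w, ⟨w, hw, rfl⟩, htrans (hmono a _ _ hrw) hr⟩
  · intro h a x₁ x₂ hr
    have h1 : (a :: x₂) ∈ ρ ((a :: ·) '' ρ {x₁}) := by
      rw [hρ]
      exact ⟨a :: x₂, ⟨x₂, by rw [hρ]; exact ⟨x₁, rfl, hr⟩, rfl⟩, hrefl _⟩
    rw [← h] at h1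
    rw [hρ] at h1
    obtain ⟨u, ⟨x, hx, rfl⟩, hru⟩ := h1
    rw [Set.mem_singleton_iff] at hx
    subst hx
    exact hru
end

section
/- Let ρ be an upper closure operator on ℘(Σ*) that is backward complete for left and right concatenation by every letter. Then ρ is backward complete for binary language concatenation: for all Y, Z ⊆ Σ*, ρ(YZ) = ρ(ρ(Y)·ρ(Z)). -/
private lemma stmt_10_aux {α : Type*} {ι : Sort*}
    (ρ : Set (List α) → Set (List α))
    (hmono : Monotone ρ) (hidem : ∀ X, ρ (ρ X) = ρ X) (hext : ∀ X, X ⊆ ρ X)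
    (f g : ι → Set (List α)) (h : ∀ i, ρ (f i) = ρ (g i)) :
    ρ (⋃ i, f i) = ρ (⋃ i, g i) := by
  have hUnion : ∀ (f : ι → Set (List α)), ρ (⋃ i, f i) = ρ (⋃ i, ρ (f i)) := by
    intro f
    apply le_antisymm
    · exact hmono (Set.iUnion_mono fun i => hext (f i))
    · have h1 : (⋃ i, ρ (f i)) ⊆ ρ (⋃ i, f i) :=
        Set.iUnion_subset fun i => hmono (Set.subset_iUnion f i)
      calc ρ (⋃ i, ρ (f i)) ⊆ ρ (ρ (⋃ i, f i)) := hmono h1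
        _ = ρ (⋃ i, f i) := hidem _
  rw [hUnion f, hUnion g]
  exact congrArg ρ (Set.iUnion_congr h)


theorem stmt_10 {α : Type*}
    (ρ : Set (List α) → Set (List α))
    (hmono : Monotone ρ) (hidem : ∀ X, ρ (ρ X) = ρ X) (hext : ∀ X, X ⊆ ρ X)
    (hleft : ∀ (a : α) (X : Set (List α)), ρ ((a :: ·) '' X) = ρ ((a :: ·) '' ρ X))
    (hright : ∀ (a : α) (X : Set (List α)), ρ ((· ++ [a]) '' X) = ρ ((· ++ [a]) '' ρ X)) :
    ∀ Y Z : Set (List α),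
      ρ (Set.image2 (· ++ ·) Y Z) = ρ (Set.image2 (· ++ ·) (ρ Y) (ρ Z)) := by
  -- left concatenation by a fixed word
  have hLeftWord : ∀ (u : List α) (X : Set (List α)),
      ρ ((u ++ ·) '' X) = ρ ((u ++ ·) '' ρ X) := by
    intro u
    induction u with
    | nil =>
      intro X
      simp only [List.nil_append, Set.image_id']
      rw [hidem]
    | cons a u ih =>
      intro X
      have he : ∀ (W : Set (List α)), ((a :: u) ++ ·) '' W = (a :: ·) '' ((u ++ ·) '' W) := by
        intro W
        rw [← Set.image_comp]
        rfl
      rw [he, he, hleft a, ih X, ← hleft a]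
  -- right concatenation by a fixed word
  have hRightWord : ∀ (v : List α) (X : Set (List α)),
      ρ ((· ++ v) '' X) = ρ ((· ++ v) '' ρ X) := by
    intro v
    induction v using List.reverseRecOn with
    | nil =>
      intro X
      simp only [List.append_nil, Set.image_id']
      rw [hidem]
    | append_singleton w a ih =>
      intro X
      have he : ∀ (W : Set (List α)), (· ++ (w ++ [a])) '' W = (· ++ [a]) '' ((· ++ w) '' W) := by
        intro W
        rw [← Set.image_comp]
        simp [Function.comp]
      rw [he, he, hright a, ih X, ← hright a]
  intro Y Z
  have hdec : ∀ (A B : Set (List α)),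
      Set.image2 (· ++ ·) A B = ⋃ u : A, ((u : List α) ++ ·) '' B := by
    intro A B
    ext x
    simp [Set.mem_image2, Set.mem_iUnion, eq_comm]
  have hdec2 : ∀ (A B : Set (List α)),
      Set.image2 (· ++ ·) A B = ⋃ v : B, (· ++ (v : List α)) '' A := by
    intro A B
    ext x
    simp only [Set.mem_image2, Set.mem_iUnion, Set.mem_image, Subtype.exists]
    constructor
    · rintro ⟨u, hu, v, hv, rfl⟩; exact ⟨v, hv, u, hu, rfl⟩
    · rintro ⟨v, hv, u, hu, rfl⟩; exact ⟨u, hu, v, hv, rfl⟩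
  -- first replace Z by ρ Z
  have step1 : ρ (Set.image2 (· ++ ·) Y Z) = ρ (Set.image2 (· ++ ·) Y (ρ Z)) := by
    rw [hdec Y Z, hdec Y (ρ Z)]
    exact stmt_10_aux ρ hmono hidem hext _ _ fun (u : Y) => hLeftWord u.1 Z
  have step2 : ρ (Set.image2 (· ++ ·) Y (ρ Z)) = ρ (Set.image2 (· ++ ·) (ρ Y) (ρ Z)) := by
    rw [hdec2 Y (ρ Z), hdec2 (ρ Y) (ρ Z)]
    exact stmt_10_aux ρ hmono hidem hext _ _ fun (v : ρ Z) => hRightWord v.1 Y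
  rw [step1, step2]
end

section
/- Let A = (Q, δ, I, F) be a finite automaton and ≼ a simulation relation on A. Then the relation u ⩽ v ⟺ ∀ x ∈ post_u(I), ∃ y ∈ post_v(I), x ≼ y, where post_w(I) is the set of states reachable from I reading w, is a right-monotonic quasiorder on Σ* such that no u ∈ L(A) and v ∉ L(A) satisfy u ⩽ v. -/
theorem stmt_14 {α σ : Type*} (M : NFA α σ)
    (s : σ → σ → Prop) (hsrefl : Reflexive s) (hstrans : Transitive s)
    (hsim_acc : ∀ p q, s p q → p ∈ M.accept → q ∈ M.accept)
    (hsim_step : ∀ p q (a : α) p', s p q → p' ∈ M.step p a →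
      ∃ q', q' ∈ M.step q a ∧ s p' q')
    (r : List α → List α → Prop)
    (hr : ∀ u v, r u v ↔
      ∀ x ∈ M.evalFrom M.start u, ∃ y ∈ M.evalFrom M.start v, s x y) :
    Reflexive r ∧ Transitive r ∧
      (∀ (x₁ x₂ : List α) (a : α), r x₁ x₂ → r (x₁ ++ [a]) (x₂ ++ [a])) ∧
      (∀ u v, u ∈ M.accepts → v ∉ M.accepts → ¬ r u v) := by
  refine ⟨?_, ?_, ?_, ?_⟩
  · intro u
    rw [hr]
    exact fun x hx => ⟨x, hx, hsrefl x⟩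
  · intro u v w huv hvw
    rw [hr] at *
    intro x hx
    obtain ⟨y, hy, hxy⟩ := huv x hx
    obtain ⟨z, hz, hyz⟩ := hvw y hy
    exact ⟨z, hz, hstrans hxy hyz⟩
  · intro x₁ x₂ a h
    rw [hr] at *
    intro x hx
    rw [NFA.evalFrom_append, NFA.evalFrom_singleton, NFA.mem_stepSet] at hx
    obtain ⟨p, hp, hstep⟩ := hx
    obtain ⟨q, hq, hpq⟩ := h p hp
    obtain ⟨q', hq', hq's⟩ := hsim_step p q a x hpq hstep
    exact ⟨q', by rw [NFA.evalFrom_append, NFA.evalFrom_singleton, NFA.mem_stepSet]; exact ⟨q, hq, hq'⟩, hq's⟩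
  · intro u v hu hv hruv
    rw [hr] at hruv
    obtain ⟨x, hxa, hx⟩ := hu
    obtain ⟨y, hy, hxy⟩ := hruv x hx
    exact hv ⟨y, hsim_acc x y hxy hxa, hy⟩
end

section
/- Let C be a complete lattice, f : C → C monotone admitting a right adjoint f̃ (f(c) ≤ c' ⟺ c ≤ f̃(c')), and ρ an upper closure operator on C. Then ρ is backward complete for f (ρ ∘ f = ρ ∘ f ∘ ρ) if and only if ρ is forward complete for f̃ (ρ ∘ f̃ ∘ ρ = f̃ ∘ ρ). -/
theorem stmt_19 {C : Type*} [CompleteLattice C]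
    (f g : C → C) (hf : Monotone f) (gc : GaloisConnection f g)
    (ρ : C → C) (hmono : Monotone ρ) (hidem : ∀ x, ρ (ρ x) = ρ x)
    (hext : ∀ x, x ≤ ρ x) :
    (ρ ∘ f = ρ ∘ f ∘ ρ) ↔ (ρ ∘ g ∘ ρ = g ∘ ρ) := by
  constructor
  · intro h
    funext x
    have h' : ∀ y, ρ (f y) = ρ (f (ρ y)) := fun y => congrFun h y
    simp only [Function.comp]
    refine le_antisymm ?_ (hext _)
    rw [← gc.le_iff_le]
    calc f (ρ (g (ρ x))) ≤ ρ (f (ρ (g (ρ x)))) := hext _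
      _ = ρ (f (g (ρ x))) := (h' _).symm
      _ ≤ ρ (ρ x) := hmono (gc.l_u_le _)
      _ = ρ x := hidem x
  · intro h
    funext x
    have h' : ∀ y, ρ (g (ρ y)) = g (ρ y) := fun y => congrFun h y
    simp only [Function.comp]
    refine le_antisymm (hmono (hf (hext x))) ?_
    have key : f (ρ x) ≤ ρ (f x) := by
      rw [gc.le_iff_le]
      calc ρ x ≤ ρ (g (ρ (f x))) :=
            hmono (le_trans (gc.le_u_l x) (gc.monotone_u (hext _)))
        _ = g (ρ (f x)) := h' _
    calc ρ (f (ρ x)) ≤ ρ (ρ (f x)) := hmono key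
      _ = ρ (f x) := hidem _
end
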